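/- arXiv:2207.05499 — 2 statements merged into one kernel-verified Lean document; each statement's English description precedes it below -/
import Mathlib

section
/- For all p ∈ [1, 1.7], the Banach–Mazur distance from ℓ_p^3 to ℓ_∞^3 is at most 9/5. -/
open scoped Pointwise

/-- The `p`-norm on `ℝ³` (for a real exponent `p ≥ 1`). -/
noncomputable def pnorm (p : ℝ) (x : Fin 3 → ℝ) : ℝ :=
  (∑ i, |x i| ^ p) ^ (1 / p)

/-- The unit ball of `ℓ_p^3`. -/
def ballP (p : ℝ) : Set (Fin 3 → ℝ) := {x | pnorm p x ≤ 1}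

/-- The unit ball of `ℓ_∞^3`. -/
def ballInf : Set (Fin 3 → ℝ) := {x | ∀ i, |x i| ≤ 1}

/-- The multiplicative Banach–Mazur distance between origin-symmetric convex
bodies: `inf {γ ≥ 1 : ∃ nonsingular linear T, T(L) ⊆ K ⊆ γ T(L)}`. -/
noncomputable def BMdist (K L : Set (Fin 3 → ℝ)) : ℝ :=
  sInf {γ : ℝ | 1 ≤ γ ∧ ∃ T : (Fin 3 → ℝ) ≃ₗ[ℝ] (Fin 3 → ℝ),
    (T : (Fin 3 → ℝ) →ₗ[ℝ] (Fin 3 → ℝ)) '' L ⊆ K ∧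
    K ⊆ γ • ((T : (Fin 3 → ℝ) →ₗ[ℝ] (Fin 3 → ℝ)) '' L)}

/-!
Take `T = c⁻¹ M`, where `M = circM` is the circulant matrix with rows `(-3,-3,2)`, `(2,-3,-3)`,
`(-3,2,-3)` and `c = ‖(2,2,8)‖_p`. The matrix `M` sends each vertex of the cube either to
`±(4,4,4)` or to a vector with entries `±8, ±2, ±2`; since `z ↦ ‖Mz‖_p^p` is convex and
`3·4^p ≤ 2·2^p + 8^p`, `T` maps the cube into the unit ball of `ℓ_p^3`.

Conversely `M⁻¹ = N/20` with `N = circN`, every row of which has entries of absolute values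
`3, 3, 1`, so by Hölder `‖M⁻¹ x‖_∞ ≤ ‖(3,3,1)‖_q / 20` on the `ℓ_p` ball, and `9/5` works as soon as
`‖(3,3,1)‖_q ‖(2,2,8)‖_p ≤ 36`. Both norms are log-convex in `1/p` (for `(3,3,1)` this is the
interpolation between `q = ∞` and `q = 17/7`, for `(2,2,8)` Lyapunov's inequality between
`p = 1` and `p = 17/10`), so it suffices to check `p = 1`, where the product is `3 · 12 = 36`,
and `p = 17/10`, where it is about `35.86`.
-/

open Real Matrix

lemma BMdist_le_of_mulVec {K L : Set (Fin 3 → ℝ)} {γ : ℝ} (hγ : 1 ≤ γ)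
    {A : Matrix (Fin 3) (Fin 3) ℝ} (hA : IsUnit A) (hin : ∀ y ∈ L, A *ᵥ y ∈ K)
    (hout : ∀ x ∈ K, ∃ y ∈ L, γ • A *ᵥ y = x) : BMdist K L ≤ γ := by
  refine csInf_le ⟨1, fun _ h => h.1⟩ ⟨hγ, A.toLinearEquiv' hA.invertible, ?_, ?_⟩
  · rintro _ ⟨y, hy, rfl⟩
    exact hin y hy
  · intro x hx
    obtain ⟨y, hy, rfl⟩ := hout x hx
    exact Set.smul_mem_smul_set ⟨y, hy, rfl⟩

lemma mem_ballP_iff {p : ℝ} (hp : 0 < p) {x : Fin 3 → ℝ} :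
    x ∈ ballP p ↔ ∑ i, |x i| ^ p ≤ 1 := by
  change (∑ i, |x i| ^ p) ^ (1 / p) ≤ 1 ↔ _
  refine ⟨fun h => ?_, fun h => rpow_le_one (by positivity) h (by positivity)⟩
  have := rpow_le_rpow (by positivity) h hp.le
  rwa [← rpow_mul (by positivity), one_div_mul_cancel hp.ne', rpow_one, one_rpow] at this

lemma convexOn_abs_rpow {p : ℝ} (hp : 1 ≤ p) : ConvexOn ℝ Set.univ fun t : ℝ => |t| ^ p := by
  refine ⟨convex_univ, fun x _ y _ a b ha hb hab => ?_⟩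
  calc |a • x + b • y| ^ p ≤ (a • |x| + b • |y|) ^ p := by
        refine rpow_le_rpow (abs_nonneg _) ((abs_add_le _ _).trans_eq ?_) (by linarith)
        simp [abs_mul, abs_of_nonneg ha, abs_of_nonneg hb]
    _ ≤ a • |x| ^ p + b • |y| ^ p :=
        (convexOn_rpow hp).2 (abs_nonneg x) (abs_nonneg y) ha hb hab

lemma convexOn_sum_abs_mulVec_rpow {m n : Type*} [Fintype m] [Fintype n] (A : Matrix m n ℝ)
    {p : ℝ} (hp : 1 ≤ p) : ConvexOn ℝ Set.univ fun z => ∑ i, |(A *ᵥ z) i| ^ p := by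
  refine ⟨convex_univ, fun x _ y _ a b ha hb hab => ?_⟩
  simp only [mulVec_add, mulVec_smul, Pi.add_apply, Pi.smul_apply, smul_eq_mul, Finset.mul_sum,
    ← Finset.sum_add_distrib]
  exact Finset.sum_le_sum fun i _ =>
    (convexOn_abs_rpow hp).2 (Set.mem_univ _) (Set.mem_univ _) ha hb hab

lemma ConvexOn.exists_vertex_ge {ι : Type*} [Finite ι] {f : (ι → ℝ) → ℝ}
    (hf : ConvexOn ℝ Set.univ f) {z : ι → ℝ} (hz : ∀ i, |z i| ≤ 1) :
    ∃ v : ι → ℝ, (∀ i, v i = -1 ∨ v i = 1) ∧ f z ≤ f v := by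
  have hcube : z ∈ convexHull ℝ (Set.univ.pi fun _ => ({-1, 1} : Set ℝ)) := by
    rw [convexHull_pi]
    intro i _
    rw [convexHull_pair, segment_eq_Icc (by norm_num)]
    exact abs_le.1 (hz i)
  obtain ⟨v, hv, hfv⟩ := hf.exists_ge_of_mem_convexHull (Set.subset_univ _) hcube
  exact ⟨v, fun i => hv i trivial, hfv⟩

lemma three_mul_four_rpow_le {p : ℝ} (hp : 1 ≤ p) : 3 * (4 : ℝ) ^ p ≤ 2 * 2 ^ p + 8 ^ p := by
  have h2 : (2 : ℝ) ≤ 2 ^ p := by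
    simpa using rpow_le_rpow_of_exponent_le (by norm_num : (1 : ℝ) ≤ 2) hp
  have h4 : (4 : ℝ) ^ p = (2 ^ p) ^ 2 := by
    rw [← rpow_natCast, ← rpow_mul (by norm_num), mul_comm, rpow_mul (by norm_num)]; norm_num
  have h8 : (8 : ℝ) ^ p = (2 ^ p) ^ 3 := by
    rw [← rpow_natCast, ← rpow_mul (by norm_num), mul_comm, rpow_mul (by norm_num)]; norm_num
  rw [h4, h8]
  -- with `t = 2 ^ p ≥ 2` this is `t (t - 1) (t - 2) ≥ 0`
  nlinarith [mul_nonneg (mul_nonneg (by linarith : (0 : ℝ) ≤ 2 ^ p)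
    (by linarith : (0 : ℝ) ≤ 2 ^ p - 1)) (by linarith : (0 : ℝ) ≤ 2 ^ p - 2)]

def circM : Matrix (Fin 3) (Fin 3) ℝ := !![-3, -3, 2; 2, -3, -3; -3, 2, -3]

def circN : Matrix (Fin 3) (Fin 3) ℝ := !![-3, 1, -3; -3, -3, 1; 1, -3, -3]

lemma circM_mul_circN : circM * circN = (20 : ℝ) • 1 := by
  rw [circM, circN, mul_fin_three, one_fin_three]
  norm_num

lemma sum_abs_circM_mulVec_rpow_le {p : ℝ} (hp : 1 ≤ p) {z : Fin 3 → ℝ} (hz : ∀ i, |z i| ≤ 1) :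
    ∑ i, |(circM *ᵥ z) i| ^ p ≤ 2 * 2 ^ p + 8 ^ p := by
  obtain ⟨v, hv, hle⟩ := (convexOn_sum_abs_mulVec_rpow circM hp).exists_vertex_ge hz
  refine hle.trans ?_
  have h4 := three_mul_four_rpow_le hp
  rcases hv 0 with h0 | h0 <;> rcases hv 1 with h1 | h1 <;> rcases hv 2 with h2 | h2 <;>
    norm_num [circM, mulVec, dotProduct, Fin.sum_univ_three, h0, h1, h2, cons_val_two, tail_cons,
      head_cons] <;> linarith

lemma abs_mulVec_apply_le {m n : Type*} [Fintype n] (A : Matrix m n ℝ) (x : n → ℝ) (i : m) :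
    |(A *ᵥ x) i| ≤ ∑ j, |A i j| * |x j| :=
  (Finset.abs_sum_le_sum_abs _ _).trans_eq (by simp only [abs_mul])

lemma abs_mulVec_apply_le_Lp_mul_Lq {m n : Type*} [Fintype n] {p q : ℝ}
    (hpq : p.HolderConjugate q) (A : Matrix m n ℝ) (x : n → ℝ) (i : m) :
    |(A *ᵥ x) i| ≤ (∑ j, |A i j| ^ q) ^ (1 / q) * (∑ j, |x j| ^ p) ^ (1 / p) := by
  refine (abs_mulVec_apply_le A x i).trans ?_
  simpa using inner_le_Lp_mul_Lq Finset.univ (fun j => |A i j|) (fun j => |x j|) hpq.symm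

lemma sum_abs_circN_apply_rpow (q : ℝ) (i : Fin 3) : ∑ j, |circN i j| ^ q = 2 * 3 ^ q + 1 := by
  fin_cases i <;> norm_num [circN, Fin.sum_univ_three, cons_val_two, tail_cons, head_cons] <;> ring

lemma rpow_div_le_of_pow_le {a b : ℝ} (ha : 0 ≤ a) (hb : 0 ≤ b) {n d : ℕ} (hd : d ≠ 0)
    (h : a ^ n ≤ b ^ d) : a ^ ((n : ℝ) / d) ≤ b := by
  refine le_of_pow_le_pow_left₀ hd hb ?_
  rwa [← rpow_natCast, ← rpow_mul ha, div_mul_cancel₀ _ (by positivity), rpow_natCast]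

lemma sum_rpow_le_interpolate {ι : Type*} (s : Finset ι) {f : ι → ℝ} (hf : ∀ i, 0 ≤ f i)
    {p p₁ : ℝ} (hp : 1 < p) (hpp₁ : p ≤ p₁) :
    ∑ i ∈ s, f i ^ p ≤
      (∑ i ∈ s, f i) ^ ((p₁ - p) / (p₁ - 1)) * (∑ i ∈ s, f i ^ p₁) ^ ((p - 1) / (p₁ - 1)) := by
  set r := (p₁ - 1) / (p - 1)
  have hr : 1 ≤ r := (one_le_div (by linarith)).2 (by linarith)
  have h := inner_le_weight_mul_Lp_of_nonneg s hr f (fun i => f i ^ (p - 1)) hf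
    (fun i => rpow_nonneg (hf i) _)
  have hp' : ∀ i, f i * f i ^ (p - 1) = f i ^ p := fun i => by
    rw [← rpow_one_add' (hf i) (by linarith), add_sub_cancel]
  have hp₁ : ∀ i, f i * (f i ^ (p - 1)) ^ r = f i ^ p₁ := fun i => by
    rw [← rpow_mul (hf i), mul_div_cancel₀ _ (by linarith : p - 1 ≠ 0),
      ← rpow_one_add' (hf i) (by linarith), add_sub_cancel]
  simp only [hp', hp₁] at h
  convert h using 3
  · have : p₁ - 1 ≠ 0 := by linarith
    have : p - 1 ≠ 0 := by linarith
    simp only [r]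
    field_simp
    ring
  · simp [r]

lemma norms_mul_le_at_endpoint :
    (2 * (3 : ℝ) ^ (17 / 7 : ℝ) + 1) ^ (7 / 17 : ℝ) *
      (2 * (2 : ℝ) ^ (17 / 10 : ℝ) + 8 ^ (17 / 10 : ℝ)) ^ (10 / 17 : ℝ) ≤ 36 := by
  have h3 : (3 : ℝ) ^ (17 / 7 : ℝ) ≤ 29 / 2 := by
    simpa using rpow_div_le_of_pow_le (a := 3) (n := 17) (d := 7) (by norm_num) (by norm_num)
      (by norm_num) (by norm_num)
  have h2 : (2 : ℝ) ^ (17 / 10 : ℝ) ≤ 13 / 4 := by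
    simpa using rpow_div_le_of_pow_le (a := 2) (n := 17) (d := 10) (by norm_num) (by norm_num)
      (by norm_num) (by norm_num)
  have h8 : (8 : ℝ) ^ (17 / 10 : ℝ) ≤ 3433 / 100 := by
    simpa using rpow_div_le_of_pow_le (a := 8) (n := 17) (d := 10) (by norm_num) (by norm_num)
      (by norm_num) (by norm_num)
  calc _ ≤ (30 : ℝ) ^ (7 / 17 : ℝ) * (4083 / 100 : ℝ) ^ (10 / 17 : ℝ) := by
        gcongr <;> linarith
    _ ≤ 36 := by
        refine le_of_pow_le_pow_left₀ (n := 17) (by norm_num) (by norm_num) ?_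
        rw [mul_pow, ← rpow_natCast, ← rpow_natCast ((4083 / 100 : ℝ) ^ _),
          ← rpow_mul (by norm_num), ← rpow_mul (by norm_num)]
        norm_num

lemma norms_mul_le_of_holderConjugate {p q : ℝ} (hpq : p.HolderConjugate q)
    (hp : p ≤ 17 / 10) :
    (2 * (3 : ℝ) ^ q + 1) ^ (1 / q) * (2 * (2 : ℝ) ^ p + 8 ^ p) ^ (1 / p) ≤ 36 := by
  have hp1 : 1 < p := hpq.lt
  have hq0 : 0 < q := hpq.symm.pos
  have hinv : 1 / q = 1 - 1 / p := by linarith [hpq.one_div_add_one_div]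
  have hp17 : 10 / 17 ≤ 1 / p := by
    simpa using one_div_le_one_div_of_le (by linarith) hp
  have hq : 17 / 7 ≤ q := by
    have := one_div_le_one_div_of_le (by positivity) (show 1 / q ≤ 7 / 17 by linarith)
    rw [one_div_one_div] at this
    linarith
  -- `1 / q = θ * (7 / 17)` and `1 / p = (1 - θ) + θ * (10 / 17)`
  set θ := 17 / 7 * (1 - 1 / p) with hθ
  have hθ0 : 0 ≤ θ := mul_nonneg (by norm_num) (by linarith [(div_lt_one (by linarith)).2 hp1])
  have hθ1 : θ ≤ 1 := by linarith
  set a : ℝ := 2 * 3 ^ (17 / 7 : ℝ) + 1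
  set b : ℝ := 2 * 2 ^ (17 / 10 : ℝ) + 8 ^ (17 / 10 : ℝ)
  have ha : 0 < a := by positivity
  have hb : 0 < b := by positivity
  have hS : (2 * (3 : ℝ) ^ q + 1) ^ (1 / q) ≤ 3 ^ (1 - θ) * a ^ (7 / 17 * θ) := by
    have h : 2 * (3 : ℝ) ^ q + 1 ≤ 3 ^ (q - 17 / 7) * a := by
      have : (1 : ℝ) ≤ 3 ^ (q - 17 / 7) := one_le_rpow (by norm_num) (by linarith)
      have : (3 : ℝ) ^ (q - 17 / 7) * 3 ^ (17 / 7 : ℝ) = 3 ^ q := by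
        rw [← rpow_add (by norm_num), sub_add_cancel]
      nlinarith
    calc _ ≤ ((3 : ℝ) ^ (q - 17 / 7) * a) ^ (1 / q) := by gcongr
      _ = _ := by
        rw [mul_rpow (by positivity) ha.le, ← rpow_mul (by norm_num)]
        congr 2
        · rw [hθ, ← hinv]; field_simp
        · rw [hθ, ← hinv]; ring
  have hB : (2 * (2 : ℝ) ^ p + 8 ^ p) ^ (1 / p) ≤ 12 ^ (1 - θ) * b ^ (10 / 17 * θ) := by
    have h := sum_rpow_le_interpolate Finset.univ (f := ![(2 : ℝ), 2, 8])
      (fun i => by fin_cases i <;> norm_num) hp1 hp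
    simp only [Fin.sum_univ_three, Matrix.cons_val_zero, Matrix.cons_val_one,
      Matrix.cons_val_two, Matrix.head_cons, Matrix.tail_cons] at h
    calc _ ≤ ((12 : ℝ) ^ ((17 / 10 - p) / (17 / 10 - 1)) * b ^ ((p - 1) / (17 / 10 - 1))) ^
          (1 / p) := by
          gcongr
          convert h using 3 <;> ring
      _ = _ := by
        rw [mul_rpow (by positivity) (by positivity), ← rpow_mul (by norm_num),
          ← rpow_mul hb.le]
        congr 2
        · rw [hθ]; field_simp; ring
        · rw [hθ]; field_simp; ring
  calc _ ≤ (3 ^ (1 - θ) * a ^ (7 / 17 * θ)) * (12 ^ (1 - θ) * b ^ (10 / 17 * θ)) := by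
        gcongr
    _ = 36 ^ (1 - θ) * (a ^ (7 / 17 : ℝ) * b ^ (10 / 17 : ℝ)) ^ θ := by
        rw [mul_rpow (by positivity) (by positivity), ← rpow_mul ha.le, ← rpow_mul hb.le,
          show (36 : ℝ) = 3 * 12 by norm_num, mul_rpow (by norm_num) (by norm_num)]
        ring
    _ ≤ 36 ^ (1 - θ) * 36 ^ θ := by gcongr; exact norms_mul_le_at_endpoint
    _ = 36 := by rw [← rpow_add (by norm_num), sub_add_cancel, rpow_one]

lemma abs_circN_mulVec_mul_le {p : ℝ} (hp1 : 1 ≤ p) (hp2 : p ≤ 17 / 10) {x : Fin 3 → ℝ}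
    (hx : ∑ j, |x j| ^ p ≤ 1) (i : Fin 3) :
    |(circN *ᵥ x) i| * (2 * (2 : ℝ) ^ p + 8 ^ p) ^ (1 / p) ≤ 36 := by
  rcases hp1.eq_or_lt with rfl | hp1
  · have hN : ∀ j, |circN i j| ≤ 3 := by
      intro j; fin_cases i <;> fin_cases j <;> norm_num [circN]
    have : |(circN *ᵥ x) i| ≤ 3 * ∑ j, |x j| := by
      rw [Finset.mul_sum]
      exact (abs_mulVec_apply_le circN x i).trans
        (Finset.sum_le_sum fun j _ => mul_le_mul_of_nonneg_right (hN j) (abs_nonneg _))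
    norm_num at hx ⊢
    linarith
  · have hpq := Real.HolderConjugate.conjExponent hp1
    calc |(circN *ᵥ x) i| * (2 * (2 : ℝ) ^ p + 8 ^ p) ^ (1 / p)
        ≤ (2 * (3 : ℝ) ^ p.conjExponent + 1) ^ (1 / p.conjExponent) * 1 *
            (2 * (2 : ℝ) ^ p + 8 ^ p) ^ (1 / p) := by
          gcongr
          refine (abs_mulVec_apply_le_Lp_mul_Lq hpq circN x i).trans ?_
          rw [sum_abs_circN_apply_rpow]
          gcongr
          exact rpow_le_one (by positivity) hx (by positivity)
      _ ≤ 36 := by simpa using norms_mul_le_of_holderConjugate hpq hp2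

lemma smul_circM_mulVec_mem_ballP {p : ℝ} (hp : 1 ≤ p) {z : Fin 3 → ℝ} (hz : z ∈ ballInf) :
    (((2 * (2 : ℝ) ^ p + 8 ^ p) ^ (1 / p))⁻¹ • circM) *ᵥ z ∈ ballP p := by
  have hp0 : 0 < p := by linarith
  set c := (2 * (2 : ℝ) ^ p + 8 ^ p) ^ (1 / p) with hc
  have hc0 : 0 < c := by positivity
  have hcp : c ^ p = 2 * 2 ^ p + 8 ^ p := by
    rw [hc, ← rpow_mul (by positivity), one_div_mul_cancel hp0.ne', rpow_one]
  rw [mem_ballP_iff hp0]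
  simp only [smul_mulVec, Pi.smul_apply, smul_eq_mul, abs_mul, abs_inv, abs_of_pos hc0,
    mul_rpow (inv_nonneg.2 hc0.le) (abs_nonneg _), ← Finset.mul_sum, inv_rpow hc0.le, hcp]
  rw [inv_mul_le_one₀ (by positivity)]
  exact sum_abs_circM_mulVec_rpow_le hp hz

lemma smul_circN_mulVec_mem_ballInf {p : ℝ} (hp1 : 1 ≤ p) (hp2 : p ≤ 17 / 10) {x : Fin 3 → ℝ}
    (hx : x ∈ ballP p) : ((2 * (2 : ℝ) ^ p + 8 ^ p) ^ (1 / p) / 36) • circN *ᵥ x ∈ ballInf := by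
  intro i
  have := abs_circN_mulVec_mul_le hp1 hp2 ((mem_ballP_iff (by linarith)).1 hx) i
  rw [Pi.smul_apply, smul_eq_mul, abs_mul, abs_of_pos (by positivity), div_mul_eq_mul_div,
    div_le_one (by norm_num)]
  linarith

/-- For all `p ∈ [1, 1.7]`, the Banach–Mazur distance from `ℓ_p^3` to `ℓ_∞^3`
is at most `9/5`. -/
theorem bm_lp3_linf3_le_first_portion (p : ℝ) (hp1 : 1 ≤ p) (hp2 : p ≤ 1.7) :
    BMdist (ballP p) ballInf ≤ 9 / 5 := by
  set c := (2 * (2 : ℝ) ^ p + 8 ^ p) ^ (1 / p)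
  have hc0 : 0 < c := by positivity
  have hunit : IsUnit (c⁻¹ • circM) := by
    refine (isUnit_iff_isUnit_det _).2 (isUnit_det_of_right_inverse (B := (c / 20) • circN) ?_)
    rw [smul_mul_smul_comm, circM_mul_circN, smul_smul]
    field_simp
    norm_num
  refine BMdist_le_of_mulVec (by norm_num) hunit (fun z hz => smul_circM_mulVec_mem_ballP hp1 hz)
    (fun x hx => ⟨(c / 36) • circN *ᵥ x,
      smul_circN_mulVec_mem_ballInf hp1 (by norm_num at hp2 ⊢; linarith) hx, ?_⟩)
  rw [smul_mulVec, mulVec_smul, mulVec_mulVec, circM_mul_circN, smul_mulVec, one_mulVec]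
  simp only [smul_smul]
  convert one_smul ℝ x
  field_simp
  norm_num
end

section
/- If the Banach–Mazur distance from ℓ_p^3 to ℓ_∞^3 is at most 9/5, then any subset A of ℓ_p^3 of diameter 1 can be written as a union of 8 subsets of A each of diameter at most 0.9. -/
open scoped Pointwise

/-- The diameter of a set in `ℓ_p^3`: `sup {‖x − y‖_p : x, y ∈ S}`. -/
noncomputable def pdiam (p : ℝ) (S : Set (Fin 3 → ℝ)) : ℝ :=
  sSup {d : ℝ | ∃ x ∈ S, ∃ y ∈ S, d = pnorm p (x - y)}

lemma pnorm_nonneg (p : ℝ) (x : Fin 3 → ℝ) : 0 ≤ pnorm p x :=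
  Real.rpow_nonneg (Finset.sum_nonneg fun i _ => Real.rpow_nonneg (abs_nonneg _) _) _

lemma pnorm_zero {p : ℝ} (hp : 1 ≤ p) : pnorm p (0 : Fin 3 → ℝ) = 0 := by
  have hp0 : p ≠ 0 := by positivity
  simp only [pnorm, Pi.zero_apply, abs_zero, Real.zero_rpow hp0, Finset.sum_const_zero]
  exact Real.zero_rpow (one_div_ne_zero hp0)

lemma pnorm_smul {p : ℝ} (hp : 1 ≤ p) {c : ℝ} (hc : 0 ≤ c) (x : Fin 3 → ℝ) :
    pnorm p (c • x) = c * pnorm p x := by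
  have hp0 : p ≠ 0 := by positivity
  have : ∀ i, |(c • x) i| ^ p = c ^ p * |x i| ^ p := by
    intro i
    simp only [Pi.smul_apply, smul_eq_mul, abs_mul, abs_of_nonneg hc]
    exact Real.mul_rpow hc (abs_nonneg _)
  rw [pnorm, Finset.sum_congr rfl (fun i _ => this i), ← Finset.mul_sum,
    Real.mul_rpow (by positivity) (Finset.sum_nonneg fun i _ => Real.rpow_nonneg (abs_nonneg _) _),
    ← Real.rpow_mul hc]
  rw [mul_one_div_cancel hp0, Real.rpow_one, pnorm]
  
lemma pnorm_eq_zero {p : ℝ} (hp : 1 ≤ p) {x : Fin 3 → ℝ} (h : pnorm p x = 0) : x = 0 := by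
  have hp0 : p ≠ 0 := by positivity
  have hs : (∑ i, |x i| ^ p) = 0 := by
    have := Real.rpow_eq_zero_iff_of_nonneg
      (Finset.sum_nonneg fun i _ => Real.rpow_nonneg (abs_nonneg _) _) |>.mp h
    exact this.1
  have := (Finset.sum_eq_zero_iff_of_nonneg (fun i _ => Real.rpow_nonneg (abs_nonneg _) _)).mp hs
  funext i
  have hi := this i (Finset.mem_univ i)
  have : |x i| = 0 := by
    by_contra hne
    exact hne (by
      have := Real.rpow_eq_zero_iff_of_nonneg (abs_nonneg (x i)) |>.mp hi
      exact this.1)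
  simpa [abs_eq_zero] using this

lemma pnorm_single {p : ℝ} (hp : 1 ≤ p) (i : Fin 3) :
    pnorm p (Pi.single i (1:ℝ)) = 1 := by
  have hp0 : p ≠ 0 := by positivity
  fin_cases i <;>
    simp [pnorm, Fin.sum_univ_three, Pi.single_apply, Real.zero_rpow hp0, Real.one_rpow]

def abs3 (v : Fin 3 → ℝ) : ℝ := |v 0| ⊔ (|v 1| ⊔ |v 2|)

lemma abs3_le (v : Fin 3 → ℝ) (j : Fin 3) : |v j| ≤ abs3 v := by
  fin_cases j <;> simp [abs3, le_max_iff, le_refl]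

lemma abs3_le_of {v : Fin 3 → ℝ} {c : ℝ} (h : ∀ j, |v j| ≤ c) : abs3 v ≤ c :=
  max_le (h 0) (max_le (h 1) (h 2))

lemma abs3_nonneg (v : Fin 3 → ℝ) : 0 ≤ abs3 v :=
  le_trans (abs_nonneg _) (abs3_le v 0)

noncomputable def mulv (N : Fin 3 → Fin 3 → ℝ) (x : Fin 3 → ℝ) : Fin 3 → ℝ :=
  fun j => ∑ i, N j i * x i

lemma mulv_sub (N : Fin 3 → Fin 3 → ℝ) (a b : Fin 3 → ℝ) :
    mulv N (a - b) = mulv N a - mulv N b := by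
  funext j
  simp [mulv, mul_sub, Finset.sum_sub_distrib]

lemma exists_mat (p : ℝ) (hp : 1 ≤ p) (hbm : BMdist (ballP p) ballInf ≤ 9 / 5) (n : ℕ) :
    ∃ N : Fin 3 → Fin 3 → ℝ, (∀ j i, |N j i| ≤ 3) ∧
      (∀ x, pnorm p x ≤ abs3 (mulv N x)) ∧
      (∀ x j, |mulv N x j| ≤ (9/5 + 1/(n+1)) * pnorm p x) := by
  have hp0 : p ≠ 0 := by positivity
  have hp0' : (0:ℝ) < 1 / p := by positivity
  set S := {γ : ℝ | 1 ≤ γ ∧ ∃ T : (Fin 3 → ℝ) ≃ₗ[ℝ] (Fin 3 → ℝ),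
    (T : (Fin 3 → ℝ) →ₗ[ℝ] (Fin 3 → ℝ)) '' ballInf ⊆ ballP p ∧
    ballP p ⊆ γ • ((T : (Fin 3 → ℝ) →ₗ[ℝ] (Fin 3 → ℝ)) '' ballInf)} with hS
  -- S is nonempty
  have hc3 : (0:ℝ) < (3:ℝ) ^ (-(1/p)) := Real.rpow_pos_of_pos (by norm_num) _
  set T₀ : (Fin 3 → ℝ) ≃ₗ[ℝ] (Fin 3 → ℝ) :=
    LinearEquiv.smulOfNeZero ℝ (Fin 3 → ℝ) _ (ne_of_gt hc3) with hT₀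
  have hγ₀ : (3:ℝ) ^ (1/p) ∈ S := by
    refine ⟨Real.one_le_rpow (by norm_num) (le_of_lt hp0'), T₀, ?_, ?_⟩
    · rintro x ⟨u, hu, rfl⟩
      have hsum : (∑ i, |u i| ^ p) ≤ 3 := by
        have : ∀ i : Fin 3, |u i| ^ p ≤ 1 := fun i =>
          Real.rpow_le_one (abs_nonneg _) (hu i) (by positivity)
        calc (∑ i, |u i| ^ p) ≤ ∑ _i : Fin 3, (1:ℝ) :=
              Finset.sum_le_sum fun i _ => this i
          _ = 3 := by simp
      have hpu : pnorm p u ≤ (3:ℝ) ^ (1/p) :=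
        Real.rpow_le_rpow (Finset.sum_nonneg fun i _ => Real.rpow_nonneg (abs_nonneg _) _)
          hsum (le_of_lt hp0')
      show pnorm p (T₀ u) ≤ 1
      have : T₀ u = (3:ℝ) ^ (-(1/p)) • u := rfl
      rw [this, pnorm_smul hp (le_of_lt hc3)]
      calc (3:ℝ) ^ (-(1/p)) * pnorm p u ≤ (3:ℝ) ^ (-(1/p)) * (3:ℝ) ^ (1/p) :=
            mul_le_mul_of_nonneg_left hpu (le_of_lt hc3)
        _ = 1 := by rw [← Real.rpow_add (by norm_num)]; simp
    · intro x hx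
      have hxball : x ∈ ballInf := by
        intro i
        have hsum1 : (∑ i, |x i| ^ p) ≤ 1 := by
          have h1 : pnorm p x ≤ 1 := hx
          have h2 : (pnorm p x) ^ p ≤ 1 ^ p :=
            Real.rpow_le_rpow (pnorm_nonneg p x) h1 (by positivity)
          rwa [pnorm, ← Real.rpow_mul
            (Finset.sum_nonneg fun i _ => Real.rpow_nonneg (abs_nonneg _) _),
            one_div_mul_cancel hp0, Real.rpow_one, Real.one_rpow] at h2
        have hterm : |x i| ^ p ≤ 1 := le_trans (Finset.single_le_sum
          (fun i _ => Real.rpow_nonneg (abs_nonneg _) p) (Finset.mem_univ i)) hsum1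
        have := Real.rpow_le_rpow (Real.rpow_nonneg (abs_nonneg _) _) hterm (le_of_lt hp0')
        rwa [← Real.rpow_mul (abs_nonneg _), mul_one_div_cancel hp0, Real.rpow_one,
          Real.one_rpow] at this
      refine ⟨T₀ x, ⟨x, hxball, rfl⟩, ?_⟩
      show (3:ℝ) ^ (1/p) • ((3:ℝ) ^ (-(1/p)) • x) = x
      rw [smul_smul, ← Real.rpow_add (by norm_num)]
      simp
  -- extract an element of S below 9/5 + 1/(n+1)
  have hpos : (0:ℝ) < 1 / (n + 1) := by positivity
  have hex : ∃ γ ∈ S, γ < 9/5 + 1/(n+1) := by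
    by_contra h
    push_neg at h
    have : 9/5 + 1/((n:ℝ)+1) ≤ sInf S := le_csInf ⟨_, hγ₀⟩ h
    have : BMdist (ballP p) ballInf = sInf S := rfl
    linarith [hbm, le_csInf (⟨_, hγ₀⟩ : S.Nonempty) h]
  obtain ⟨γ, ⟨hγ1, T, hT1, hT2⟩, hγlt⟩ := hex
  have hγpos : (0:ℝ) < γ := lt_of_lt_of_le one_pos hγ1
  set N : Fin 3 → Fin 3 → ℝ := fun j i => T.symm (Pi.single i (1:ℝ)) j with hN
  have hmul : ∀ x, mulv N x = T.symm x := by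
    intro x
    have hx : x = ∑ i, x i • (Pi.single i (1:ℝ) : Fin 3 → ℝ) := by
      funext j
      rw [Finset.sum_apply]
      fin_cases j <;> simp [Fin.sum_univ_three, Pi.single_apply]
    funext j
    calc mulv N x j = ∑ i, x i • T.symm (Pi.single i (1:ℝ)) j := by
          simp [mulv, hN, mul_comm, smul_eq_mul]
      _ = T.symm x j := by
          conv_rhs => rw [hx]
          rw [map_sum]
          simp [Finset.sum_apply]
  -- upper bound
  have hupper : ∀ x j, |T.symm x j| ≤ γ * pnorm p x := by
    intro x j
    rcases eq_or_lt_of_le (pnorm_nonneg p x) with h0 | hr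
    · have hx0 : x = 0 := pnorm_eq_zero hp h0.symm
      rw [hx0, map_zero, pnorm_zero hp, mul_zero]
      simp
    · have hx1 : (pnorm p x)⁻¹ • x ∈ ballP p := by
        show pnorm p _ ≤ 1
        rw [pnorm_smul hp (le_of_lt (inv_pos.mpr hr))]
        rw [inv_mul_cancel₀ (ne_of_gt hr)]
      obtain ⟨y, ⟨u, hu, rfl⟩, hyx⟩ := hT2 hx1
      have key : T.symm x = (pnorm p x * γ) • u := by
        have h1 : γ • u = (pnorm p x)⁻¹ • T.symm x := by
          have := congrArg T.symm hyx
          simpa [map_smul] using this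
        have := congrArg (fun v => pnorm p x • v) h1
        simp only [smul_smul] at this
        rw [mul_inv_cancel₀ (ne_of_gt hr), one_smul] at this
        exact this.symm
      rw [key]
      have : |((pnorm p x * γ) • u) j| = pnorm p x * γ * |u j| := by
        simp [abs_mul, abs_of_pos hr, abs_of_pos hγpos]
      rw [this, mul_comm (pnorm p x) γ]
      calc γ * pnorm p x * |u j| ≤ γ * pnorm p x * 1 :=
            mul_le_mul_of_nonneg_left (hu j) (by positivity)
        _ = γ * pnorm p x := mul_one _
  -- lower bound
  have hlower : ∀ x, pnorm p x ≤ abs3 (T.symm x) := by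
    intro x
    rcases eq_or_lt_of_le (abs3_nonneg (T.symm x)) with h0 | hw
    · have hz : T.symm x = 0 := by
        funext j
        have := abs3_le (T.symm x) j
        rw [← h0] at this
        exact abs_eq_zero.mp (le_antisymm this (abs_nonneg _))
      have hx0 : x = 0 := by
        have := congrArg T hz
        simpa [map_zero] using this
      rw [hx0, pnorm_zero hp]
      exact abs3_nonneg _
    · set w := abs3 (T.symm x) with hwdef
      have hu : w⁻¹ • T.symm x ∈ ballInf := by
        intro j
        have : |(w⁻¹ • T.symm x) j| = w⁻¹ * |T.symm x j| := by
          simp [abs_mul, abs_of_pos (inv_pos.mpr hw)]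
        rw [this]
        calc w⁻¹ * |T.symm x j| ≤ w⁻¹ * w :=
              mul_le_mul_of_nonneg_left (abs3_le _ j) (le_of_lt (inv_pos.mpr hw))
          _ = 1 := inv_mul_cancel₀ (ne_of_gt hw)
      have hTball : pnorm p (T (w⁻¹ • T.symm x)) ≤ 1 := hT1 ⟨_, hu, rfl⟩
      rw [map_smul, T.apply_symm_apply, pnorm_smul hp (le_of_lt (inv_pos.mpr hw))] at hTball
      calc pnorm p x = w * (w⁻¹ * pnorm p x) := by
            rw [← mul_assoc, mul_inv_cancel₀ (ne_of_gt hw), one_mul]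
        _ ≤ w * 1 := mul_le_mul_of_nonneg_left hTball (le_of_lt hw)
        _ = w := mul_one w
  refine ⟨N, ?_, ?_, ?_⟩
  · intro j i
    have := hupper (Pi.single i (1:ℝ)) j
    rw [pnorm_single hp] at this
    have h1 : (1:ℝ)/((n:ℝ)+1) ≤ 1 := by
      rw [div_le_one (by positivity)]; linarith [Nat.cast_nonneg (α := ℝ) n]
    calc |N j i| ≤ γ * 1 := this
      _ ≤ 3 := by linarith
  · intro x; rw [hmul]; exact hlower x
  · intro x j
    rw [hmul]
    calc |T.symm x j| ≤ γ * pnorm p x := hupper x j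
      _ ≤ (9/5 + 1/(n+1)) * pnorm p x :=
          mul_le_mul_of_nonneg_right (le_of_lt hγlt) (pnorm_nonneg p x)

open Filter in
lemma exists_limit_mat (p : ℝ) (hp : 1 ≤ p) (hbm : BMdist (ballP p) ballInf ≤ 9 / 5) :
    ∃ M : Fin 3 → Fin 3 → ℝ,
      (∀ x, pnorm p x ≤ abs3 (mulv M x)) ∧
      (∀ x j, |mulv M x j| ≤ (9/5) * pnorm p x) := by
  choose N hNb hNl hNu using exists_mat p hp hbm
  have hmem : ∀ n, N n ∈ Metric.closedBall (0 : Fin 3 → Fin 3 → ℝ) 3 := by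
    intro n
    rw [Metric.mem_closedBall, dist_zero_right,
      pi_norm_le_iff_of_nonneg (by norm_num : (0:ℝ) ≤ 3)]
    intro j
    rw [pi_norm_le_iff_of_nonneg (by norm_num : (0:ℝ) ≤ 3)]
    intro i
    simpa [Real.norm_eq_abs] using hNb n j i
  obtain ⟨M, _, φ, hφ, hconv⟩ :=
    (isCompact_closedBall (0 : Fin 3 → Fin 3 → ℝ) 3).tendsto_subseq hmem
  have hentry : ∀ j i, Tendsto (fun n => N (φ n) j i) atTop (nhds (M j i)) := by
    intro j i
    exact tendsto_pi_nhds.mp (tendsto_pi_nhds.mp hconv j) i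
  have hmv : ∀ x j, Tendsto (fun n => mulv (N (φ n)) x j) atTop (nhds (mulv M x j)) := by
    intro x j
    unfold mulv
    exact tendsto_finset_sum _ fun i _ => (hentry j i).mul_const (x i)
  refine ⟨M, ?_, ?_⟩
  · intro x
    have habs : Tendsto (fun n => abs3 (mulv (N (φ n)) x)) atTop (nhds (abs3 (mulv M x))) := by
      unfold abs3
      exact ((hmv x 0).abs).max (((hmv x 1).abs).max ((hmv x 2).abs))
    exact ge_of_tendsto' habs fun n => hNl (φ n) x
  · intro x j
    have hφ0 : Tendsto (fun n => 1/((φ n : ℝ)+1)) atTop (nhds 0) :=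
      tendsto_one_div_add_atTop_nhds_zero_nat.comp hφ.tendsto_atTop
    have hg : Tendsto (fun n => (9/5 + 1/((φ n : ℝ)+1)) * pnorm p x) atTop
        (nhds ((9/5) * pnorm p x)) := by
      have := (Tendsto.add (tendsto_const_nhds (x := (9/5 : ℝ))) hφ0).mul_const (pnorm p x)
      simpa using this
    exact le_of_tendsto_of_tendsto' ((hmv x j).abs) hg fun n => hNu (φ n) x j

/-- If the Banach–Mazur distance from `ℓ_p^3` to `ℓ_∞^3` is at most `9/5`,
then any subset `A` of `ℓ_p^3` of diameter `1` is the union of `8` subsets of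
`A` whose diameters are at most `0.9`. -/
theorem borsuk_partition (p : ℝ) (hp : 1 ≤ p)
    (hbm : BMdist (ballP p) ballInf ≤ 9 / 5)
    (A : Set (Fin 3 → ℝ)) (hA : pdiam p A = 1) :
    ∃ F : Fin 8 → Set (Fin 3 → ℝ),
      (∀ i, F i ⊆ A) ∧ A = ⋃ i, F i ∧ ∀ i, pdiam p (F i) ≤ 0.9 := by
  obtain ⟨M, hMl, hMu⟩ := exists_limit_mat p hp hbm
  have hAne : A.Nonempty := by
    by_contra h
    rw [Set.not_nonempty_iff_eq_empty] at h
    rw [h] at hA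
    simp only [pdiam, Set.mem_empty_iff_false, false_and, exists_false,
      Set.setOf_false, Real.sSup_empty] at hA
    norm_num at hA
  have hpair : ∀ a ∈ A, ∀ b ∈ A, pnorm p (a - b) ≤ 1 := by
    intro a ha b hb
    by_cases hB : BddAbove {d : ℝ | ∃ x ∈ A, ∃ y ∈ A, d = pnorm p (x - y)}
    · exact le_trans (le_csSup hB ⟨a, ha, b, hb, rfl⟩) (le_of_eq hA)
    · rw [pdiam, Real.sSup_of_not_bddAbove hB] at hA
      norm_num at hA
  have hMd : ∀ a ∈ A, ∀ b ∈ A, ∀ j, |mulv M a j - mulv M b j| ≤ 9/5 := by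
    intro a ha b hb j
    have h1 : |mulv M (a - b) j| ≤ (9/5) * pnorm p (a - b) := hMu (a - b) j
    rw [mulv_sub] at h1
    have h2 : (9/5 : ℝ) * pnorm p (a - b) ≤ 9/5 * 1 :=
      mul_le_mul_of_nonneg_left (hpair a ha b hb) (by norm_num)
    calc |mulv M a j - mulv M b j| = |(mulv M a - mulv M b) j| := by simp
      _ ≤ 9/5 := by linarith
  obtain ⟨a₀, ha₀⟩ := hAne
  set c : Fin 3 → ℝ := fun j => sInf ((fun a => mulv M a j) '' A) with hc
  have hbdd : ∀ j, BddBelow ((fun a => mulv M a j) '' A) := by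
    intro j
    refine ⟨mulv M a₀ j - 9/5, ?_⟩
    rintro t ⟨b, hb, rfl⟩
    have := abs_le.mp (hMd a₀ ha₀ b hb j)
    linarith [this.1, this.2]
  have hcle : ∀ a ∈ A, ∀ j, c j ≤ mulv M a j := fun a ha j =>
    csInf_le (hbdd j) ⟨a, ha, rfl⟩
  have hlec : ∀ a ∈ A, ∀ j, mulv M a j ≤ c j + 9/5 := by
    intro a ha j
    have : mulv M a j - 9/5 ≤ c j := by
      apply le_csInf (Set.Nonempty.image _ ⟨a₀, ha₀⟩)
      rintro t ⟨b, hb, rfl⟩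
      have := abs_le.mp (hMd a ha b hb j)
      linarith [this.1, this.2]
    linarith
  set G : (Fin 3 → Bool) → Set (Fin 3 → ℝ) := fun s =>
    {a ∈ A | ∀ j, if s j then mulv M a j ≤ c j + 9/10 else c j + 9/10 ≤ mulv M a j}
    with hG
  have hcard : Fintype.card (Fin 3 → Bool) = 8 := by simp
  set e : (Fin 3 → Bool) ≃ Fin 8 := Fintype.equivFinOfCardEq hcard with he
  refine ⟨fun k => G (e.symm k), fun k => fun a ha => ha.1, ?_, ?_⟩
  · apply Set.Subset.antisymm
    · intro a ha
      refine Set.mem_iUnion.mpr ⟨e (fun j => decide (mulv M a j ≤ c j + 9/10)), ?_⟩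
      rw [Equiv.symm_apply_apply]
      refine ⟨ha, fun j => ?_⟩
      by_cases h : mulv M a j ≤ c j + 9/10
      · simp [h]
      · simp [h, le_of_lt (lt_of_not_ge h)]
    · exact Set.iUnion_subset fun k a ha => ha.1
  · intro k
    apply Real.sSup_le _ (by norm_num)
    rintro d ⟨x, hx, y, hy, rfl⟩
    have hkey : ∀ j, |mulv M x j - mulv M y j| ≤ 9/10 := by
      intro j
      have hxj := hx.2 j
      have hyj := hy.2 j
      cases hsj : (e.symm k) j with
      | true =>
        rw [hsj, if_pos rfl] at hxj hyj
        have h1 := hcle x hx.1 j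
        have h2 := hcle y hy.1 j
        rw [abs_le]
        constructor <;> linarith
      | false =>
        rw [hsj] at hxj hyj
        simp only [Bool.false_eq_true, if_false] at hxj hyj
        have h1 := hlec x hx.1 j
        have h2 := hlec y hy.1 j
        rw [abs_le]
        constructor <;> linarith
    have : pnorm p (x - y) ≤ 9/10 := by
      calc pnorm p (x - y) ≤ abs3 (mulv M (x - y)) := hMl (x - y)
        _ ≤ 9/10 := by
            rw [mulv_sub]
            exact abs3_le_of fun j => by simpa using hkey j
    calc pnorm p (x - y) ≤ 9/10 := this
      _ ≤ 0.9 := by norm_num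
end
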